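/- arXiv:1201.4102 — 2 statements merged into one kernel-verified Lean document; each statement's English description precedes it below -/
import Mathlib

section
/- Let ψ(t) = (t, q_i(t), q_j(t), p^i(t)) be an integral curve of the dynamical vector field X of the unified formalism lying in W_L. Then the base curve φ(t) = (t, q_0(t)) satisfies the k-th order Euler–Lagrange equations: Σ_{i=0}^{k} (−1)^i (d^i/dt^i)[ (∂L/∂q_i)(t, q_0(t), q_0'(t), ..., q_0^{(k)}(t)) ] = 0. -/
/-! **Integral curves of the unified dynamics satisfy the higher-order
Euler–Lagrange equations.**

Let `L = L(t, q_0, …, q_k)` be smooth, and let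
`ψ(t) = (t, q_0(t), …, q_{2k-1}(t), p^0(t), …, p^{k-1}(t))` be an integral
curve of the dynamical semispray `X` lying in `W_L`; in coordinates:
`q_l' = q_{l+1}` (`0 ≤ l ≤ 2k-2`), `(p^0_A)' = ∂L̂/∂q_0^A`,
`(p^i_A)' = ∂L̂/∂q_i^A − p_A^{i-1}` (`1 ≤ i ≤ k-1`), together with the
Legendre–Ostrogradsky constraints (evaluated along the — holonomic — curve:
`p_A^{r-1}(t) = Σ_{i=0}^{k-r} (−1)^i (d/dt)^i[(∂L/∂q_{r+i}^A)(j^k q_0 (t))]`).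
Then the base curve `φ(t) = (t, q_0(t))` satisfies the `k`-th order
Euler–Lagrange equations
`Σ_{i=0}^{k} (−1)^i (d^i/dt^i)[(∂L/∂q_i^A)(j^k q_0(t))] = 0`. -/

variable (n k : ℕ)

abbrev Jk (n k : ℕ) := ℝ × (Fin (k + 1) → Fin n → ℝ)

/-- `∂L/∂q_i^A`. -/
noncomputable def pd (L : Jk n k → ℝ) (i : Fin (k + 1)) (A : Fin n)
    (x : Jk n k) : ℝ :=
  fderiv ℝ L x ((0 : ℝ), Pi.single i (Pi.single A (1 : ℝ)))

/-- The curve in `J^kπ` determined by the first `k+1` groups of `q`-coordinates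
of the curve `qc` in `J^{2k-1}π`. -/
def Jc (qc : ℝ → Fin (2 * k) → Fin n → ℝ) (t : ℝ) : Jk n k :=
  (t, fun i A => if h : i.1 < 2 * k then qc t ⟨i.1, h⟩ A else 0)

/-! Differentiating the `r = 1` Legendre–Ostrogradsky constraint
`p^0 = Σ_{i<k} (-1)^i (d/dt)^i ∂L/∂q_{i+1}` and substituting `(p^0)' = ∂L/∂q_0` turns it
into `∂L/∂q_0 = Σ_{i<k} (-1)^i (d/dt)^{i+1} ∂L/∂q_{i+1}`, which is the Euler–Lagrange
equation. -/

open Finset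

theorem sum_range_alternating_iteratedDeriv_eq_zero {F : ℕ → ℝ → ℝ} {k : ℕ} {t : ℝ}
    (hF : ∀ i < k, DifferentiableAt ℝ (iteratedDeriv i (F (i + 1))) t)
    (hp : HasDerivAt (fun s => ∑ i ∈ range k, (-1 : ℝ) ^ i * iteratedDeriv i (F (i + 1)) s)
      (F 0 t) t) :
    ∑ j ∈ range (k + 1), (-1 : ℝ) ^ j * iteratedDeriv j (F j) t = 0 := by
  have hsum :
      HasDerivAt (fun s => ∑ i ∈ range k, (-1 : ℝ) ^ i * iteratedDeriv i (F (i + 1)) s)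
      (∑ i ∈ range k, (-1 : ℝ) ^ i * iteratedDeriv (i + 1) (F (i + 1)) t) t :=
    HasDerivAt.fun_sum fun i hi => by
      rw [iteratedDeriv_succ]
      exact (hF i (mem_range.1 hi)).hasDerivAt.const_mul _
  have hF0 := hp.unique hsum
  rw [sum_range_succ', pow_zero, one_mul, iteratedDeriv_zero, hF0, ← sum_add_distrib]
  exact sum_eq_zero fun i _ => by ring

section

variable {n k : ℕ}

theorem contDiff_pd {m : WithTop ℕ∞} {L : Jk n k → ℝ} (hL : ContDiff ℝ (m + 1) L)
    (i : Fin (k + 1)) (A : Fin n) : ContDiff ℝ m (pd n k L i A) :=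
  (hL.fderiv_right le_rfl).clm_apply contDiff_const

theorem contDiff_Jc {m : WithTop ℕ∞} {qc : ℝ → Fin (2 * k) → Fin n → ℝ}
    (hqc : ∀ (l : Fin (2 * k)) (A : Fin n), ContDiff ℝ m fun t => qc t l A) :
    ContDiff ℝ m (Jc n k qc) := by
  refine contDiff_id.prodMk (contDiff_pi.2 fun i => contDiff_pi.2 fun A => ?_)
  by_cases h : i.1 < 2 * k
  · simpa only [dif_pos h] using hqc ⟨i, h⟩ A
  · simpa only [dif_neg h] using contDiff_const

end

theorem Fin.clamp_eq_mk {j m : ℕ} (h : j < m + 1) : Fin.clamp j m = ⟨j, h⟩ :=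
  Fin.ext (min_eq_left (Nat.le_of_lt_succ h))

/-- **Euler–Lagrange equations from the unified formalism.** -/
theorem euler_lagrange_of_unified_integral_curve (hk : 1 ≤ k)
    (L : Jk n k → ℝ) (hL : ContDiff ℝ (⊤ : ℕ∞) L)
    (qc : ℝ → Fin (2 * k) → Fin n → ℝ) (pc : ℝ → Fin k → Fin n → ℝ)
    (hqc : ∀ (l : Fin (2 * k)) (A : Fin n), ContDiff ℝ (⊤ : ℕ∞) fun t => qc t l A)
    -- `(p^0_A)' = ∂L̂/∂q_0^A`:
    (hODEp0 : ∀ (t : ℝ) (A : Fin n),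
      HasDerivAt (fun s => pc s ⟨0, by omega⟩ A)
        (pd n k L ⟨0, by omega⟩ A (Jc n k qc t)) t)
    -- Legendre–Ostrogradsky constraints along the curve:
    (hconstr : ∀ (t : ℝ) (r : ℕ) (h1 : 1 ≤ r) (h2 : r ≤ k) (A : Fin n),
      pc t ⟨r - 1, by omega⟩ A =
        ∑ i : Fin (k - r + 1), (-1 : ℝ) ^ (i : ℕ) *
          iteratedDeriv i
            (fun s => pd n k L ⟨r + i.1, by have := i.isLt; omega⟩ A
              (Jc n k qc s)) t) :
    -- conclusion: the `k`-th order Euler–Lagrange equations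
    ∀ (t : ℝ) (A : Fin n),
      ∑ i : Fin (k + 1), (-1 : ℝ) ^ (i : ℕ) *
        iteratedDeriv i (fun s => pd n k L i A (Jc n k qc s)) t = 0 := by
  intro t A
  -- `∂L/∂q_j` along the curve, indexed by `ℕ` (clamped at `k`) so that sums reindex freely
  set F : ℕ → ℝ → ℝ := fun j s => pd n k L (Fin.clamp j k) A (Jc n k qc s)
  have hF : ∀ j, ContDiff ℝ (⊤ : ℕ∞) (F j) := fun j =>
    (contDiff_pd (by simpa using hL) _ _).comp (contDiff_Jc hqc)
  have hp0 : (fun s => pc s ⟨0, by omega⟩ A) =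
      fun s => ∑ i ∈ range k, (-1 : ℝ) ^ i * iteratedDeriv i (F (i + 1)) s := by
    ext s
    conv_rhs => rw [← Nat.sub_add_cancel hk]
    rw [hconstr s 1 le_rfl hk A,
      ← Fin.sum_univ_eq_sum_range (fun i => (-1 : ℝ) ^ i * iteratedDeriv i (F (i + 1)) s)]
    refine sum_congr rfl fun i _ => ?_
    simp only [F, Fin.clamp_eq_mk (show i.1 + 1 < k + 1 by omega), Nat.add_comm 1]
  have hEL := sum_range_alternating_iteratedDeriv_eq_zero
    (fun i _ => (hF (i + 1)).differentiable_iteratedDeriv i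
      (WithTop.coe_lt_coe.2 (ENat.natCast_lt_top i)) t)
    (hp0 ▸ hODEp0 t A)
  rw [← Fin.sum_univ_eq_sum_range] at hEL
  simpa only [F, Fin.clamp_eq_mk (Fin.isLt _)] using hEL
end

section
/- (Integration-by-parts core of the higher-order variational principle.) For L = L(t, q_0,...,q_k) smooth and compactly supported variation δ: ℝ → ℝ^n smooth, d/ds|_{s=0} ∫_ℝ L(t, (q+sδ)(t), (q+sδ)'(t), ..., (q+sδ)^{(k)}(t)) dt = ∫_ℝ ⟨ Σ_{i=0}^{k} (−1)^i (d/dt)^i (∂L/∂q_i ∘ j^k q)(t), δ(t) ⟩ dt. Consequently, a smooth curve q is a critical point of the action under all compactly supported variations iff it satisfies the k-th order Euler–Lagrange equations Σ_{i=0}^{k}(−1)^i(d/dt)^i(∂L/∂q_i ∘ j^k q) = 0. -/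
open MeasureTheory

/-! **The integration-by-parts core of the higher-order variational
principle, and the higher-order Euler–Lagrange equations.**

`L : ℝ × (ℝ^n)^{k+1} → ℝ` smooth, `q : ℝ → ℝ^n` smooth with
`j^k q (t) = (t, q(t), q'(t), …, q^{(k)}(t))`, and `δ : ℝ → ℝ^n` smooth with
compact support.  Assuming the action integral converges (the base integrand
`L ∘ j^k q` is integrable), one has
`d/ds|₀ ∫ L(j^k(q + sδ)(t)) dt
  = ∫ ⟨Σ_{i=0}^k (−1)^i (d/dt)^i (∂L/∂q_i ∘ j^k q)(t), δ(t)⟩ dt`,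
and consequently `q` is critical under all compactly supported variations iff
it satisfies the `k`-th order Euler–Lagrange equations. -/

variable (n k : ℕ)

/-- The `k`-jet prolongation of a curve. -/
noncomputable def jet (c : ℝ → Fin n → ℝ) (t : ℝ) : Jk n k :=
  (t, fun i A => iteratedDeriv i.1 (fun s => c s A) t)

/-- The Euler–Lagrange expression
`Σ_{i=0}^k (−1)^i (d/dt)^i (∂L/∂q_i^A ∘ j^k q)(t)`. -/
noncomputable def ELexpr (L : Jk n k → ℝ) (q : ℝ → Fin n → ℝ) (t : ℝ)
    (A : Fin n) : ℝ :=
  ∑ i : Fin (k + 1), (-1 : ℝ) ^ (i : ℕ) *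
    iteratedDeriv i.1 (fun s => pd n k L i A (jet n k q s)) t

/-! Writing `V = (0, δ, δ', …, δ⁽ᵏ⁾)` for the vertical prolongation of `δ`, the jet of
`q + sδ` is the affine line `j^k q + s V`, and `V` vanishes off the compact support of `δ`.
The `s`-derivatives of the integrand are therefore bounded by a constant on that compact set,
so one may differentiate under the integral and obtain `∫ dL(j^k q) V`. Expanding `dL` in the
coordinates `q_i^A` and integrating the `i`-th term by parts `i` times moves the derivatives from
`δ` onto `∂L/∂q_i^A ∘ j^k q`, the boundary terms vanishing by compact support. Testing with
`δ = g e_A` and applying the fundamental lemma of the calculus of variations gives the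
Euler–Lagrange characterization. -/

open scoped ContDiff

section IteratedDeriv

variable {𝕜 F : Type*} [NontriviallyNormedField 𝕜] [NormedAddCommGroup F] [NormedSpace 𝕜 F]

theorem ContDiff.iteratedDeriv {f : 𝕜 → F} (hf : ContDiff 𝕜 ∞ f) (i : ℕ) :
    ContDiff 𝕜 ∞ (iteratedDeriv i f) := by
  rw [iteratedDeriv_eq_iterate]
  exact hf.iterate_deriv i

theorem iteratedDeriv_eq_zero_of_notMem_tsupport {f : 𝕜 → F} {x : 𝕜} (hx : x ∉ tsupport f)
    (i : ℕ) : iteratedDeriv i f x = 0 := by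
  rw [((notMem_tsupport_iff_eventuallyEq.1 hx).iteratedDeriv i).eq_of_nhds]
  simp

theorem HasCompactSupport.iteratedDeriv {f : 𝕜 → F} (hf : HasCompactSupport f) (i : ℕ) :
    HasCompactSupport (iteratedDeriv i f) := by
  rw [iteratedDeriv_eq_equiv_comp]
  exact (hf.iteratedFDeriv i).comp_left (map_zero _)

end IteratedDeriv

theorem integral_mul_deriv_eq_neg_integral_deriv_mul {f g : ℝ → ℝ} (hf : ContDiff ℝ 1 f)
    (hg : ContDiff ℝ 1 g) (hgc : HasCompactSupport g) :
    ∫ t, f t * deriv g t = -∫ t, deriv f t * g t :=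
  integral_mul_deriv_eq_deriv_mul_of_integrable
    (fun t _ => (hf.differentiable one_ne_zero t).hasDerivAt)
    (fun t _ => (hg.differentiable one_ne_zero t).hasDerivAt)
    ((hf.continuous.mul (hg.continuous_deriv le_rfl)).integrable_of_hasCompactSupport
      hgc.deriv.mul_left)
    (((hf.continuous_deriv le_rfl).mul hg.continuous).integrable_of_hasCompactSupport
      hgc.mul_left)
    ((hf.continuous.mul hg.continuous).integrable_of_hasCompactSupport hgc.mul_left)

theorem integral_mul_iteratedDeriv_eq_neg_one_pow_mul {f g : ℝ → ℝ} (hf : ContDiff ℝ ∞ f)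
    (hg : ContDiff ℝ ∞ g) (hgc : HasCompactSupport g) (i : ℕ) :
    ∫ t, f t * iteratedDeriv i g t = (-1) ^ i * ∫ t, iteratedDeriv i f t * g t := by
  induction i generalizing g with
  | zero => simp
  | succ i ih =>
    have hg' : ContDiff ℝ ∞ (deriv g) := by simpa using hg.iteratedDeriv 1
    calc ∫ t, f t * iteratedDeriv (i + 1) g t
        = ∫ t, f t * iteratedDeriv i (deriv g) t := by simp_rw [iteratedDeriv_succ']
      _ = (-1) ^ i * ∫ t, iteratedDeriv i f t * deriv g t := ih hg' hgc.deriv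
      _ = (-1) ^ i * -∫ t, deriv (iteratedDeriv i f) t * g t := by
          rw [integral_mul_deriv_eq_neg_integral_deriv_mul ((hf.iteratedDeriv i).of_le
            (by exact_mod_cast le_top)) (hg.of_le (by exact_mod_cast le_top)) hgc]
      _ = (-1) ^ (i + 1) * ∫ t, iteratedDeriv (i + 1) f t * g t := by
          simp_rw [iteratedDeriv_succ]; ring

theorem integral_sum_mul_iteratedDeriv_eq {ι : Type*} (s : Finset ι) (m : ι → ℕ)
    {f : ι → ℝ → ℝ} (hf : ∀ i, ContDiff ℝ ∞ (f i)) {g : ℝ → ℝ} (hg : ContDiff ℝ ∞ g)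
    (hgc : HasCompactSupport g) :
    ∫ t, ∑ i ∈ s, f i t * iteratedDeriv (m i) g t
      = ∫ t, (∑ i ∈ s, (-1) ^ m i * iteratedDeriv (m i) (f i) t) * g t := by
  have integrable_mul {u v : ℝ → ℝ} (hu : Continuous u) (hv : Continuous v)
      (hvc : HasCompactSupport v) : Integrable fun t => u t * v t :=
    (hu.mul hv).integrable_of_hasCompactSupport hvc.mul_left
  simp_rw [Finset.sum_mul, mul_assoc]
  rw [integral_finsetSum _ fun i _ => integrable_mul (hf i).continuous
      ((hg.iteratedDeriv _).continuous) (hgc.iteratedDeriv _),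
    integral_finsetSum _ fun i _ => (integrable_mul ((hf i).iteratedDeriv _).continuous
      hg.continuous hgc).const_mul _]
  refine Finset.sum_congr rfl fun i _ => ?_
  rw [integral_const_mul, integral_mul_iteratedDeriv_eq_neg_one_pow_mul (hf i) hg hgc]

theorem hasDerivAt_integral_comp_add_smul {E F : Type*} [NormedAddCommGroup E]
    [NormedSpace ℝ E] [NormedAddCommGroup F] [NormedSpace ℝ F] {L : E → F}
    (hL : ContDiff ℝ 1 L) {γ D : ℝ → E} (hγ : Continuous γ) (hD : Continuous D)
    (hDc : HasCompactSupport D) (hint : Integrable fun t => L (γ t)) :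
    HasDerivAt (fun s : ℝ => ∫ t, L (γ t + s • D t)) (∫ t, fderiv ℝ L (γ t) (D t)) 0 := by
  set F' : ℝ → ℝ → F := fun s t => fderiv ℝ L (γ t + s • D t) (D t)
  have hF' : Continuous fun p : ℝ × ℝ => F' p.1 p.2 :=
    ((hL.continuous_fderiv one_ne_zero).comp (by fun_prop)).clm_apply (hD.comp continuous_snd)
  obtain ⟨M, hM⟩ := ((isCompact_closedBall (0 : ℝ) 1).prod hDc).exists_bound_of_continuousOn
    hF'.continuousOn
  -- `F' s` vanishes off `tsupport D`, so a constant on that compact set dominates it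
  have h_bound : ∀ᵐ t, ∀ s ∈ Metric.ball (0 : ℝ) 1,
      ‖F' s t‖ ≤ (tsupport D).indicator (fun _ => M) t := by
    refine .of_forall fun t s hs => ?_
    by_cases ht : t ∈ tsupport D
    · rw [Set.indicator_of_mem ht]
      exact hM (s, t) ⟨Metric.ball_subset_closedBall hs, ht⟩
    · simp [F', Set.indicator_of_notMem ht, image_eq_zero_of_notMem_tsupport ht]
  have h_diff : ∀ᵐ t, ∀ s ∈ Metric.ball (0 : ℝ) 1,
      HasDerivAt (fun s => L (γ t + s • D t)) (F' s t) s := by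
    refine .of_forall fun t s _ => ?_
    have hline : HasDerivAt (fun s : ℝ => γ t + s • D t) (D t) s := by
      simpa using ((hasDerivAt_id s).smul_const (D t)).const_add (γ t)
    exact (hL.differentiable one_ne_zero _).hasFDerivAt.comp_hasDerivAt s hline
  have h_bound_int : Integrable ((tsupport D).indicator fun _ => M) :=
    (integrable_indicator_iff (isClosed_tsupport D).measurableSet).2
      (integrableOn_const hDc.measure_lt_top.ne enorm_ne_top)
  simpa [F'] using (hasDerivAt_integral_of_dominated_loc_of_deriv_le
    (F := fun s t => L (γ t + s • D t)) (Metric.ball_mem_nhds 0 one_pos)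
    (.of_forall fun s => (hL.continuous.comp (by fun_prop)).aestronglyMeasurable)
    (by simpa only [zero_smul, add_zero] using hint)
    (hF'.comp (continuous_const.prodMk continuous_id)).aestronglyMeasurable
    h_bound h_bound_int h_diff).2

noncomputable def verticalJet (δ : ℝ → Fin n → ℝ) (t : ℝ) : Jk n k :=
  (0, fun i A => iteratedDeriv i.1 (fun s => δ s A) t)

theorem jet_add_smul {q δ : ℝ → Fin n → ℝ} (hq : ContDiff ℝ ∞ q) (hδ : ContDiff ℝ ∞ δ)
    (s t : ℝ) :
    jet n k (fun u => q u + s • δ u) t = jet n k q t + s • verticalJet n k δ t := by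
  refine Prod.ext (by simp [jet, verticalJet]) (funext fun i => funext fun A => ?_)
  have hqA := (contDiff_pi.1 hq A).of_le (m := i.1) (by exact_mod_cast le_top)
  have hδA := (contDiff_pi.1 hδ A).of_le (m := i.1) (by exact_mod_cast le_top)
  simp only [jet, verticalJet, Prod.snd_add, Prod.smul_snd, Pi.add_apply, Pi.smul_apply,
    smul_eq_mul]
  rw [iteratedDeriv_fun_add hqA.contDiffAt (contDiff_const.mul hδA).contDiffAt,
    iteratedDeriv_const_mul_field]

theorem contDiff_jet {q : ℝ → Fin n → ℝ} (hq : ContDiff ℝ ∞ q) : ContDiff ℝ ∞ (jet n k q) :=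
  contDiff_id.prodMk (contDiff_pi.2 fun i => contDiff_pi.2 fun A =>
    (contDiff_pi.1 hq A).iteratedDeriv i)

theorem continuous_verticalJet {δ : ℝ → Fin n → ℝ} (hδ : ContDiff ℝ ∞ δ) :
    Continuous (verticalJet n k δ) :=
  continuous_const.prodMk (continuous_pi fun i => continuous_pi fun A =>
    ((contDiff_pi.1 hδ A).iteratedDeriv i).continuous)

theorem HasCompactSupport.verticalJet {δ : ℝ → Fin n → ℝ} (hδc : HasCompactSupport δ) :
    HasCompactSupport (verticalJet n k δ) := by
  refine hδc.mono' (Function.support_subset_iff'.2 fun t ht => ?_)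
  have hA (A : Fin n) : t ∉ tsupport fun s => δ s A :=
    fun h => ht (tsupport_comp_subset (g := fun v : Fin n → ℝ => v A) rfl δ h)
  simp [_root_.verticalJet, iteratedDeriv_eq_zero_of_notMem_tsupport (hA _), Prod.ext_iff,
    funext_iff]

theorem ContinuousLinearMap.apply_zero_prod_eq_sum (ℓ : Jk n k →L[ℝ] ℝ)
    (v : Fin (k + 1) → Fin n → ℝ) :
    ℓ (0, v) = ∑ A, ∑ i, ℓ (0, Pi.single i (Pi.single A 1)) * v i A := by
  have hv : ((0 : ℝ), v) = ∑ A, ∑ i, v i A • ((0 : ℝ), Pi.single i (Pi.single A (1 : ℝ))) := by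
    refine Prod.ext (by simp [Prod.fst_sum]) (funext fun i => funext fun A => ?_)
    simp [Prod.snd_sum, Finset.sum_apply, Pi.single_apply]
  rw [hv]
  simp only [map_sum, map_smul, smul_eq_mul, mul_comm]

theorem contDiff_pd_jet {L : Jk n k → ℝ} (hL : ContDiff ℝ ∞ L) {q : ℝ → Fin n → ℝ}
    (hq : ContDiff ℝ ∞ q) (i : Fin (k + 1)) (A : Fin n) :
    ContDiff ℝ ∞ fun s => pd n k L i A (jet n k q s) :=
  ((hL.fderiv_right (by exact_mod_cast le_top)).clm_apply contDiff_const).comp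
    (contDiff_jet n k hq)

theorem continuous_ELexpr {L : Jk n k → ℝ} (hL : ContDiff ℝ ∞ L) {q : ℝ → Fin n → ℝ}
    (hq : ContDiff ℝ ∞ q) (A : Fin n) : Continuous fun t => ELexpr n k L q t A :=
  continuous_finsetSum _ fun i _ => continuous_const.mul
    ((contDiff_pd_jet n k hL hq i A).iteratedDeriv i).continuous

theorem integral_fderiv_apply_verticalJet {L : Jk n k → ℝ} (hL : ContDiff ℝ ∞ L)
    {q δ : ℝ → Fin n → ℝ} (hq : ContDiff ℝ ∞ q) (hδ : ContDiff ℝ ∞ δ)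
    (hδc : HasCompactSupport δ) :
    ∫ t, fderiv ℝ L (jet n k q t) (verticalJet n k δ t)
      = ∫ t, ∑ A, ELexpr n k L q t A * δ t A := by
  have hδA (A : Fin n) : ContDiff ℝ ∞ fun s => δ s A := contDiff_pi.1 hδ A
  have hδAc (A : Fin n) : HasCompactSupport fun s => δ s A :=
    hδc.comp_left (g := fun v : Fin n → ℝ => v A) rfl
  have hterm_int (A : Fin n) : Integrable fun t =>
      ∑ i, pd n k L i A (jet n k q t) * iteratedDeriv i (fun s => δ s A) t :=
    integrable_finsetSum _ fun i _ =>
      ((contDiff_pd_jet n k hL hq i A).continuous.mul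
        ((hδA A).iteratedDeriv i).continuous).integrable_of_hasCompactSupport
        ((hδAc A).iteratedDeriv i).mul_left
  have hEL_int (A : Fin n) : Integrable fun t => ELexpr n k L q t A * δ t A :=
    ((continuous_ELexpr n k hL hq A).mul (hδA A).continuous).integrable_of_hasCompactSupport
      (hδAc A).mul_left
  calc ∫ t, fderiv ℝ L (jet n k q t) (verticalJet n k δ t)
      = ∫ t, ∑ A, ∑ i, pd n k L i A (jet n k q t) * iteratedDeriv i (fun s => δ s A) t := by
        congr 1 with t
        exact (fderiv ℝ L (jet n k q t)).apply_zero_prod_eq_sum n k _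
    _ = ∑ A, ∫ t, ELexpr n k L q t A * δ t A := by
        rw [integral_finsetSum _ fun A _ => hterm_int A]
        exact Finset.sum_congr rfl fun A _ =>
          integral_sum_mul_iteratedDeriv_eq _ _ (contDiff_pd_jet n k hL hq · A) (hδA A) (hδAc A)
    _ = ∫ t, ∑ A, ELexpr n k L q t A * δ t A :=
        (integral_finsetSum _ fun A _ => hEL_int A).symm

theorem eq_zero_of_forall_integral_mul_eq_zero {f : ℝ → ℝ} (hf : Continuous f)
    (h : ∀ g : ℝ → ℝ, ContDiff ℝ ∞ g → HasCompactSupport g → ∫ t, f t * g t = 0) : f = 0 :=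
  (hf.ae_eq_iff_eq volume continuous_const).1 <|
    ae_eq_zero_of_integral_contDiff_smul_eq_zero hf.locallyIntegrable fun g hg hgc => by
      simpa [mul_comm] using h g hg hgc

/-- **First variation formula and the higher-order Euler–Lagrange
equations.** -/
theorem first_variation_and_euler_lagrange
    (L : Jk n k → ℝ) (hL : ContDiff ℝ (⊤ : ℕ∞) L)
    (q : ℝ → Fin n → ℝ) (hq : ContDiff ℝ (⊤ : ℕ∞) q)
    (hInt : Integrable (fun t : ℝ => L (jet n k q t))) :
    -- first variation = integrated Euler–Lagrange expression against `δ`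
    (∀ δ : ℝ → Fin n → ℝ, ContDiff ℝ (⊤ : ℕ∞) δ → HasCompactSupport δ →
      HasDerivAt
        (fun s : ℝ => ∫ t : ℝ, L (jet n k (fun u => q u + s • δ u) t))
        (∫ t : ℝ, ∑ A : Fin n, ELexpr n k L q t A * δ t A) 0) ∧
    -- criticality under all compactly supported variations ↔ Euler–Lagrange
    ((∀ δ : ℝ → Fin n → ℝ, ContDiff ℝ (⊤ : ℕ∞) δ → HasCompactSupport δ →
        HasDerivAt
          (fun s : ℝ => ∫ t : ℝ, L (jet n k (fun u => q u + s • δ u) t)) 0 0)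
      ↔ (∀ (t : ℝ) (A : Fin n), ELexpr n k L q t A = 0)) := by
  have first_variation (δ : ℝ → Fin n → ℝ) (hδ : ContDiff ℝ ∞ δ) (hδc : HasCompactSupport δ) :
      HasDerivAt (fun s : ℝ => ∫ t, L (jet n k (fun u => q u + s • δ u) t))
        (∫ t, ∑ A, ELexpr n k L q t A * δ t A) 0 := by
    simp_rw [jet_add_smul n k hq hδ, ← integral_fderiv_apply_verticalJet n k hL hq hδ hδc]
    exact hasDerivAt_integral_comp_add_smul (hL.of_le (by exact_mod_cast le_top))
      (contDiff_jet n k hq).continuous (continuous_verticalJet n k hδ) (hδc.verticalJet n k) hInt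
  refine ⟨first_variation, fun hcrit t A => ?_, fun hEL δ hδ hδc => ?_⟩
  · refine congrFun (eq_zero_of_forall_integral_mul_eq_zero (continuous_ELexpr n k hL hq A)
      fun g hg hgc => ?_) t
    -- test against the variation `g e_A`
    have hδ : ContDiff ℝ ∞ fun t => (Pi.single A (g t) : Fin n → ℝ) :=
      (ContinuousLinearMap.single ℝ (fun _ : Fin n => ℝ) A).contDiff.comp hg
    have hδc : HasCompactSupport fun t => (Pi.single A (g t) : Fin n → ℝ) :=
      hgc.comp_left (Pi.single_zero A)
    simpa [Pi.single_apply] using (first_variation _ hδ hδc).unique (hcrit _ hδ hδc)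
  · simpa [hEL] using first_variation δ hδ hδc
end
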